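/- For every r ∈ ℕ with r ≥ 1, every n ∈ ℕ, and every x ∈ ℚ, the Changhee polynomial of order r satisfies Ch_n^{(r)}(x) = Σ_{m=0}^{n} S_1(n,m) · E_m^{(r)}(x), where S_1(n,m) are the signed Stirling numbers of the first kind and E_m^{(r)}(x) are the Euler polynomials of order r. -/

import Mathlib

/-- `log(1+t) = ∑_{n ≥ 1} (-1)^{n+1} t^n / n` as a formal power series over `ℚ`. -/
noncomputable def logOneAdd : PowerSeries ℚ :=
  PowerSeries.mk fun n => if n = 0 then 0 else (-1 : ℚ) ^ (n + 1) / n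

/-- `e^{xt} = ∑_{n ≥ 0} x^n t^n / n!` as a formal power series over `ℚ`. -/
noncomputable def expMul (x : ℚ) : PowerSeries ℚ :=
  PowerSeries.mk fun n => x ^ n / (n.factorial : ℚ)

/-- Formal composition `f(g(t))` of power series, intended for `g` with zero
constant term (then `coeff n (g^m) = 0` for `m > n`, so the sum below is the
full composition). -/
noncomputable def psComp (f g : PowerSeries ℚ) : PowerSeries ℚ :=
  PowerSeries.mk fun n =>
    ∑ m ∈ Finset.range (n + 1),
      PowerSeries.coeff m f * PowerSeries.coeff n (g ^ m)

/-- `(1+t)^x := exp (x · log(1+t))` as a formal power series over `ℚ`. -/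
noncomputable def onePlusPow (x : ℚ) : PowerSeries ℚ :=
  psComp (PowerSeries.exp ℚ) (x • logOneAdd)

/-- The falling factorial `(x)_n = x (x-1) ⋯ (x-n+1)`. -/
def fallFact (x : ℚ) (n : ℕ) : ℚ := ∏ i ∈ Finset.range n, (x - (i : ℚ))

/-! Since `log(1+t)` has no constant term, substituting it for `t` is a ring homomorphism of
power series; it sends `e^t` to `1+t` and `e^{xt}` to `(1+t)^x`. Applied to the generating function
of `E^{(r)}` it therefore produces that of `Ch^{(r)}`, while on the monomials `t^m/m!` it
produces `(log(1+t))^m/m! = ∑ S₁(n,m) t^n/n!`. -/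

namespace PowerSeries

lemma coeff_pow_eq_zero_of_lt {R : Type*} [CommSemiring R] {g : R⟦X⟧}
    (hg : constantCoeff g = 0) {k m : ℕ} (h : k < m) : coeff k (g ^ m) = 0 :=
  X_pow_dvd_iff.mp (pow_dvd_pow_of_dvd (X_dvd_iff.mpr hg) m) k h

variable {A : Type*} [CommRing A] [Algebra ℚ A]

lemma one_add_X_mul_derivative_log : (1 + X) * d⁄dX A (log A) = 1 := by
  ext n
  rcases n with _ | n
  · simp [deriv_log]
  · simp [deriv_log, add_mul, coeff_succ_X_mul, pow_succ, coeff_one]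

/-- With `w = 1/(1+X)` the derivative of `log(1+X)`, the chain rule gives `h' = h w` for
`h = exp(log(1+X))`, and `w' = -w²`; so `h w` is constant, equal to `1`. -/
lemma exp_subst_log : (exp A).subst (log A) = 1 + X := by
  have := IsAddTorsionFree.of_module_rat A
  set h := (exp A).subst (log A)
  set w := d⁄dX A (log A)
  have hw : (1 + X) * w = 1 := one_add_X_mul_derivative_log
  have hdh : d⁄dX A h = h * w := by
    rw [derivative_subst HasSubst.log, derivative_exp]
  have hdw : w * w + d⁄dX A w = 0 := by
    have := congrArg (d⁄dX A) hw
    simp only [Derivation.leibniz, Derivation.map_one_eq_zero, map_add, derivative_X,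
      smul_eq_mul] at this
    linear_combination w * this - d⁄dX A w * hw
  have hh : constantCoeff h = 1 := by
    rw [← coeff_zero_eq_constantCoeff_apply, coeff_subst' HasSubst.log,
      finsum_eq_single _ 0 fun d hd => by
        rw [coeff_pow_eq_zero_of_lt constantCoeff_log (Nat.pos_of_ne_zero hd), smul_zero]]
    simp
  have hhw : h * w = 1 := by
    refine derivative.ext ?_ ?_
    · rw [Derivation.leibniz, hdh, Derivation.map_one_eq_zero, smul_eq_mul, smul_eq_mul]
      linear_combination h * hdw
    · simp [hh, w, deriv_log]
  calc h = h * w * (1 + X) := by rw [mul_assoc, mul_comm w, hw, mul_one]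
    _ = 1 + X := by rw [hhw, one_mul]

end PowerSeries

open PowerSeries Finset

lemma psComp_eq_subst {f g : ℚ⟦X⟧} (hg : constantCoeff g = 0) : psComp f g = f.subst g := by
  ext n
  rw [coeff_subst' (HasSubst.of_constantCoeff_zero' hg),
    finsum_eq_sum_of_support_subset (s := range (n + 1))]
  · simp [psComp]
  · intro m hm
    contrapose! hm
    simp [coeff_pow_eq_zero_of_lt hg (by simpa using hm)]

lemma logOneAdd_eq_log : logOneAdd = log ℚ := by
  ext n
  simp [logOneAdd]

lemma expMul_eq_rescale (x : ℚ) : expMul x = rescale x (exp ℚ) := by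
  ext n
  simp [expMul, coeff_rescale, div_eq_mul_inv]

lemma onePlusPow_eq_subst (x : ℚ) : onePlusPow x = (expMul x).subst (log ℚ) := by
  rw [onePlusPow, logOneAdd_eq_log, psComp_eq_subst (by simp), expMul_eq_rescale,
    rescale_eq_subst, subst_comp_subst_apply (HasSubst.smul_X' x) HasSubst.log,
    subst_smul HasSubst.log, subst_X HasSubst.log]

theorem changhee_eq_stirling_sum_euler_general
    (r : ℕ) (x : ℚ) (Ch E : ℕ → ℚ) (S1 : ℕ → ℕ → ℚ)
    (hCh : (2 : PowerSeries ℚ) ^ r * onePlusPow x =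
      (PowerSeries.X + 2) ^ r * (PowerSeries.mk fun k => Ch k / (k.factorial : ℚ)))
    (hE : (2 : PowerSeries ℚ) ^ r * expMul x =
      (PowerSeries.exp ℚ + 1) ^ r * (PowerSeries.mk fun k => E k / (k.factorial : ℚ)))
    (hS1 : ∀ m, logOneAdd ^ m =
      (m.factorial : ℚ) • (PowerSeries.mk fun k => S1 k m / (k.factorial : ℚ))) :
    ∀ n, Ch n = ∑ m ∈ Finset.range (n + 1), S1 n m * E m := by
  set F : ℚ⟦X⟧ := mk fun k => Ch k / (k.factorial : ℚ)
  set G : ℚ⟦X⟧ := mk fun k => E k / (k.factorial : ℚ)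
  have hsubst := congrArg (substAlgHom (HasSubst.log (A := ℚ))) hE
  simp only [map_mul, map_pow, map_add, map_one, map_ofNat, coe_substAlgHom, exp_subst_log,
    ← onePlusPow_eq_subst, hCh] at hsubst
  have hX2 : (X + 2 : ℚ⟦X⟧) ^ r ≠ 0 := pow_ne_zero r fun h => by
    simpa [map_ofNat] using congrArg constantCoeff h
  have hFG : F = psComp G logOneAdd := by
    rw [psComp_eq_subst (by simp [logOneAdd_eq_log]), logOneAdd_eq_log]
    refine mul_left_cancel₀ hX2 ?_
    rw [hsubst]
    ring
  intro n
  have hn := congrArg (coeff n) hFG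
  simp only [F, G, psComp, coeff_mk, hS1, map_smul] at hn
  have hterm : ∀ m ∈ range (n + 1),
      E m / m.factorial * (m.factorial : ℚ) • (S1 n m / n.factorial) =
        S1 n m * E m / n.factorial := fun m _ => by
    rw [smul_eq_mul]
    field_simp
  rwa [sum_congr rfl hterm, ← sum_div, div_left_inj' (by positivity)] at hn

theorem changhee_eq_stirling_sum_euler
    (r : ℕ) (hr : 1 ≤ r) (x : ℚ) (Ch E : ℕ → ℚ) (S1 : ℕ → ℕ → ℚ)
    (hCh : (2 : PowerSeries ℚ) ^ r * onePlusPow x =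
      (PowerSeries.X + 2) ^ r * (PowerSeries.mk fun k => Ch k / (k.factorial : ℚ)))
    (hE : (2 : PowerSeries ℚ) ^ r * expMul x =
      (PowerSeries.exp ℚ + 1) ^ r * (PowerSeries.mk fun k => E k / (k.factorial : ℚ)))
    (hS1 : ∀ m, logOneAdd ^ m =
      (m.factorial : ℚ) • (PowerSeries.mk fun k => S1 k m / (k.factorial : ℚ))) :
    ∀ n, Ch n = ∑ m ∈ Finset.range (n + 1), S1 n m * E m :=
  changhee_eq_stirling_sum_euler_general r x Ch E S1 hCh hE hS1
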